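/- Let $u, v, w \in \mathbb{R}^7$ be orthonormal with $\varphi_0(u,v,w) = 0$, and set $R = \chi(u,v,w)$. Then the 4-plane spanned by $u, v, w, R$ is coassociative, i.e., $\varphi_0$ vanishes on every triple of vectors from $\{u, v, w, R\}$. -/

import Mathlib

noncomputable section
open scoped RealInnerProductSpace

abbrev R7 : Type := EuclideanSpace ℝ (Fin 7)

/-- standard basis vector -/
def e (k : Fin 7) : R7 := EuclideanSpace.single k 1

/-- `e^{ijk}(u,v,w)` -/
def tri (i j k : Fin 7) (u v w : R7) : ℝ :=
  Matrix.det !![u i, u j, u k; v i, v j, v k; w i, w j, w k]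

/-- the standard `G₂` 3-form `φ₀` (indices shifted to 0-based) -/
def phi0 (u v w : R7) : ℝ :=
  tri 0 1 2 u v w + tri 0 3 4 u v w + tri 0 5 6 u v w + tri 1 3 5 u v w
    - tri 1 4 6 u v w - tri 2 3 6 u v w - tri 2 4 5 u v w

/-- `e^{ijkl}(u,v,w,z)` -/
def quad (i j k l : Fin 7) (u v w z : R7) : ℝ :=
  Matrix.det !![u i, u j, u k, u l; v i, v j, v k, v l;
    w i, w j, w k, w l; z i, z j, z k, z l]

/-- the 4-form `⋆φ₀` -/
def starphi0 (u v w z : R7) : ℝ :=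
  quad 3 4 5 6 u v w z + quad 1 2 5 6 u v w z + quad 1 2 3 4 u v w z
    + quad 0 2 4 6 u v w z - quad 0 2 3 5 u v w z - quad 0 1 4 5 u v w z
    - quad 0 1 3 6 u v w z

/-- the cross product: `⟪u × v, w⟫ = φ₀(u,v,w)` -/
def cross (u v : R7) : R7 :=
  (WithLp.equiv 2 (Fin 7 → ℝ)).symm fun k => phi0 u v (e k)

/-- the associator `χ`: `⟪χ(u,v,w), z⟫ = ⋆φ₀(u,v,w,z)` -/
def chi (u v w : R7) : R7 :=
  (WithLp.equiv 2 (Fin 7 → ℝ)).symm fun k => starphi0 u v w (e k)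

/-- the coassociator `σ` -/
def sigma (a b c d : R7) : R7 :=
  ⟪b, cross c d⟫ • a + ⟪c, cross a d⟫ • b + ⟪a, cross b d⟫ • c + ⟪b, cross a c⟫ • d

/-- Gram determinant `|u ∧ v ∧ w|²` -/
def gram3 (u v w : R7) : ℝ :=
  Matrix.det !![⟪u,u⟫, ⟪u,v⟫, ⟪u,w⟫; ⟪v,u⟫, ⟪v,v⟫, ⟪v,w⟫; ⟪w,u⟫, ⟪w,v⟫, ⟪w,w⟫]

/-- Gram determinant `|u ∧ v ∧ w ∧ z|²` -/
def gram4 (u v w z : R7) : ℝ :=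
  Matrix.det !![⟪u,u⟫, ⟪u,v⟫, ⟪u,w⟫, ⟪u,z⟫;
    ⟪v,u⟫, ⟪v,v⟫, ⟪v,w⟫, ⟪v,z⟫;
    ⟪w,u⟫, ⟪w,v⟫, ⟪w,w⟫, ⟪w,z⟫;
    ⟪z,u⟫, ⟪z,v⟫, ⟪z,w⟫, ⟪z,z⟫]


lemma quad_eq (i j k l : Fin 7) (u v w z : R7) :
    quad i j k l u v w z =
      -(z i * tri j k l u v w) + z j * tri i k l u v w
        - z k * tri i j l u v w + z l * tri i j k u v w := by
  simp [quad, tri, Matrix.det_succ_row_zero, Fin.sum_univ_succ, Matrix.det_fin_three,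
    Fin.succAbove, Fin.castSucc, Fin.castAdd, Fin.castLE]
  ring

lemma chi_apply0 (u v w : R7) : chi u v w 0 =
    u 1 * v 3 * w 6 + u 1 * v 4 * w 5 - u 1 * v 5 * w 4 - u 1 * v 6 * w 3 + u 2 * v 3 * w 5 - u 2 * v 4 * w 6 - u 2 * v 5 * w 3 + u 2 * v 6 * w 4 - u 3 * v 1 * w 6 - u 3 * v 2 * w 5 + u 3 * v 5 * w 2 + u 3 * v 6 * w 1 - u 4 * v 1 * w 5 + u 4 * v 2 * w 6 + u 4 * v 5 * w 1 - u 4 * v 6 * w 2 + u 5 * v 1 * w 4 + u 5 * v 2 * w 3 - u 5 * v 3 * w 2 - u 5 * v 4 * w 1 + u 6 * v 1 * w 3 - u 6 * v 2 * w 4 - u 6 * v 3 * w 1 + u 6 * v 4 * w 2 := by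
  simp [chi, starphi0, quad_eq, e, EuclideanSpace.single_apply, tri, Matrix.det_fin_three]; ring

lemma chi_apply1 (u v w : R7) : chi u v w 1 =
    - u 0 * v 3 * w 6 - u 0 * v 4 * w 5 + u 0 * v 5 * w 4 + u 0 * v 6 * w 3 - u 2 * v 3 * w 4 + u 2 * v 4 * w 3 - u 2 * v 5 * w 6 + u 2 * v 6 * w 5 + u 3 * v 0 * w 6 + u 3 * v 2 * w 4 - u 3 * v 4 * w 2 - u 3 * v 6 * w 0 + u 4 * v 0 * w 5 - u 4 * v 2 * w 3 + u 4 * v 3 * w 2 - u 4 * v 5 * w 0 - u 5 * v 0 * w 4 + u 5 * v 2 * w 6 + u 5 * v 4 * w 0 - u 5 * v 6 * w 2 - u 6 * v 0 * w 3 - u 6 * v 2 * w 5 + u 6 * v 3 * w 0 + u 6 * v 5 * w 2 := by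
  simp [chi, starphi0, quad_eq, e, EuclideanSpace.single_apply, tri, Matrix.det_fin_three]; ring

lemma chi_apply2 (u v w : R7) : chi u v w 2 =
    - u 0 * v 3 * w 5 + u 0 * v 4 * w 6 + u 0 * v 5 * w 3 - u 0 * v 6 * w 4 + u 1 * v 3 * w 4 - u 1 * v 4 * w 3 + u 1 * v 5 * w 6 - u 1 * v 6 * w 5 + u 3 * v 0 * w 5 - u 3 * v 1 * w 4 + u 3 * v 4 * w 1 - u 3 * v 5 * w 0 - u 4 * v 0 * w 6 + u 4 * v 1 * w 3 - u 4 * v 3 * w 1 + u 4 * v 6 * w 0 - u 5 * v 0 * w 3 - u 5 * v 1 * w 6 + u 5 * v 3 * w 0 + u 5 * v 6 * w 1 + u 6 * v 0 * w 4 + u 6 * v 1 * w 5 - u 6 * v 4 * w 0 - u 6 * v 5 * w 1 := by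
  simp [chi, starphi0, quad_eq, e, EuclideanSpace.single_apply, tri, Matrix.det_fin_three]; ring

lemma chi_apply3 (u v w : R7) : chi u v w 3 =
    u 0 * v 1 * w 6 + u 0 * v 2 * w 5 - u 0 * v 5 * w 2 - u 0 * v 6 * w 1 - u 1 * v 0 * w 6 - u 1 * v 2 * w 4 + u 1 * v 4 * w 2 + u 1 * v 6 * w 0 - u 2 * v 0 * w 5 + u 2 * v 1 * w 4 - u 2 * v 4 * w 1 + u 2 * v 5 * w 0 - u 4 * v 1 * w 2 + u 4 * v 2 * w 1 - u 4 * v 5 * w 6 + u 4 * v 6 * w 5 + u 5 * v 0 * w 2 - u 5 * v 2 * w 0 + u 5 * v 4 * w 6 - u 5 * v 6 * w 4 + u 6 * v 0 * w 1 - u 6 * v 1 * w 0 - u 6 * v 4 * w 5 + u 6 * v 5 * w 4 := by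
  simp [chi, starphi0, quad_eq, e, EuclideanSpace.single_apply, tri, Matrix.det_fin_three]; ring

lemma chi_apply4 (u v w : R7) : chi u v w 4 =
    u 0 * v 1 * w 5 - u 0 * v 2 * w 6 - u 0 * v 5 * w 1 + u 0 * v 6 * w 2 - u 1 * v 0 * w 5 + u 1 * v 2 * w 3 - u 1 * v 3 * w 2 + u 1 * v 5 * w 0 + u 2 * v 0 * w 6 - u 2 * v 1 * w 3 + u 2 * v 3 * w 1 - u 2 * v 6 * w 0 + u 3 * v 1 * w 2 - u 3 * v 2 * w 1 + u 3 * v 5 * w 6 - u 3 * v 6 * w 5 + u 5 * v 0 * w 1 - u 5 * v 1 * w 0 - u 5 * v 3 * w 6 + u 5 * v 6 * w 3 - u 6 * v 0 * w 2 + u 6 * v 2 * w 0 + u 6 * v 3 * w 5 - u 6 * v 5 * w 3 := by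
  simp [chi, starphi0, quad_eq, e, EuclideanSpace.single_apply, tri, Matrix.det_fin_three]; ring

lemma chi_apply5 (u v w : R7) : chi u v w 5 =
    - u 0 * v 1 * w 4 - u 0 * v 2 * w 3 + u 0 * v 3 * w 2 + u 0 * v 4 * w 1 + u 1 * v 0 * w 4 - u 1 * v 2 * w 6 - u 1 * v 4 * w 0 + u 1 * v 6 * w 2 + u 2 * v 0 * w 3 + u 2 * v 1 * w 6 - u 2 * v 3 * w 0 - u 2 * v 6 * w 1 - u 3 * v 0 * w 2 + u 3 * v 2 * w 0 - u 3 * v 4 * w 6 + u 3 * v 6 * w 4 - u 4 * v 0 * w 1 + u 4 * v 1 * w 0 + u 4 * v 3 * w 6 - u 4 * v 6 * w 3 - u 6 * v 1 * w 2 + u 6 * v 2 * w 1 - u 6 * v 3 * w 4 + u 6 * v 4 * w 3 := by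
  simp [chi, starphi0, quad_eq, e, EuclideanSpace.single_apply, tri, Matrix.det_fin_three]; ring

lemma chi_apply6 (u v w : R7) : chi u v w 6 =
    - u 0 * v 1 * w 3 + u 0 * v 2 * w 4 + u 0 * v 3 * w 1 - u 0 * v 4 * w 2 + u 1 * v 0 * w 3 + u 1 * v 2 * w 5 - u 1 * v 3 * w 0 - u 1 * v 5 * w 2 - u 2 * v 0 * w 4 - u 2 * v 1 * w 5 + u 2 * v 4 * w 0 + u 2 * v 5 * w 1 - u 3 * v 0 * w 1 + u 3 * v 1 * w 0 + u 3 * v 4 * w 5 - u 3 * v 5 * w 4 + u 4 * v 0 * w 2 - u 4 * v 2 * w 0 - u 4 * v 3 * w 5 + u 4 * v 5 * w 3 + u 5 * v 1 * w 2 - u 5 * v 2 * w 1 + u 5 * v 3 * w 4 - u 5 * v 4 * w 3 := by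
  simp [chi, starphi0, quad_eq, e, EuclideanSpace.single_apply, tri, Matrix.det_fin_three]; ring

lemma phi0_eq (u v w : R7) : phi0 u v w =
    u 0 * v 1 * w 2 - u 0 * v 2 * w 1 + u 0 * v 3 * w 4 - u 0 * v 4 * w 3 + u 0 * v 5 * w 6 - u 0 * v 6 * w 5 - u 1 * v 0 * w 2 + u 1 * v 2 * w 0 + u 1 * v 3 * w 5 - u 1 * v 4 * w 6 - u 1 * v 5 * w 3 + u 1 * v 6 * w 4 + u 2 * v 0 * w 1 - u 2 * v 1 * w 0 - u 2 * v 3 * w 6 - u 2 * v 4 * w 5 + u 2 * v 5 * w 4 + u 2 * v 6 * w 3 - u 3 * v 0 * w 4 - u 3 * v 1 * w 5 + u 3 * v 2 * w 6 + u 3 * v 4 * w 0 + u 3 * v 5 * w 1 - u 3 * v 6 * w 2 + u 4 * v 0 * w 3 + u 4 * v 1 * w 6 + u 4 * v 2 * w 5 - u 4 * v 3 * w 0 - u 4 * v 5 * w 2 - u 4 * v 6 * w 1 - u 5 * v 0 * w 6 + u 5 * v 1 * w 3 - u 5 * v 2 * w 4 - u 5 * v 3 * w 1 + u 5 * v 4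 * w 2 + u 5 * v 6 * w 0 + u 6 * v 0 * w 5 - u 6 * v 1 * w 4 - u 6 * v 2 * w 3 + u 6 * v 3 * w 2 + u 6 * v 4 * w 1 - u 6 * v 5 * w 0 := by
  simp [phi0, tri, Matrix.det_fin_three]; ring

set_option maxHeartbeats 2000000 in
lemma key1 (u v w : R7) : phi0 u v (chi u v w) = 0 := by
  rw [phi0_eq, chi_apply0, chi_apply1, chi_apply2, chi_apply3, chi_apply4,
    chi_apply5, chi_apply6]
  ring

set_option maxHeartbeats 2000000 in
lemma key2 (u v w : R7) : phi0 u w (chi u v w) = 0 := by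
  rw [phi0_eq, chi_apply0, chi_apply1, chi_apply2, chi_apply3, chi_apply4,
    chi_apply5, chi_apply6]
  ring

set_option maxHeartbeats 2000000 in
lemma key3 (u v w : R7) : phi0 v w (chi u v w) = 0 := by
  rw [phi0_eq, chi_apply0, chi_apply1, chi_apply2, chi_apply3, chi_apply4,
    chi_apply5, chi_apply6]
  ring


set_option maxHeartbeats 4000000 in
theorem stmt8 (u v w : R7) (hu : ‖u‖ = 1) (hv : ‖v‖ = 1) (hw : ‖w‖ = 1)
    (huv : ⟪u, v⟫ = 0) (hvw : ⟪v, w⟫ = 0) (huw : ⟪u, w⟫ = 0)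
    (hphi : phi0 u v w = 0) :
    ∀ i j k : Fin 4, i < j → j < k →
      phi0 (![u, v, w, chi u v w] i) (![u, v, w, chi u v w] j)
        (![u, v, w, chi u v w] k) = 0 := by
  intro i j k hij hjk
  fin_cases i <;> fin_cases j <;> fin_cases k <;>
    simp only [Fin.isValue, Matrix.cons_val_zero, Matrix.cons_val_one, Matrix.head_cons,
      Matrix.cons_val_two, Matrix.tail_cons, Matrix.cons_val_three] <;>
    first
      | exact absurd hij (by decide)
      | exact absurd hjk (by decide)
      | exact hphi
      | exact key1 u v w
      | exact key2 u v w
      | exact key3 u v w
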